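/- Let T be an observation table and (≡,f) a merging map on T of minimal size, with resulting transducer M. If there exist an open completion M' of (≡,f) and a word u∈Up such that u∈dom(⟦M'⟧) and the run of u in M' uses a muted or open transition, then there exist two transducers M1 and M2 compatible with T, each having the minimal number of states among transducers compatible with T, such that ⟦M1⟧|_Up ≠ ⟦M2⟧|_Up (i.e., there exist competing minimal transducers compatible with T). -/

import Mathlib

attribute [local instance] Classical.propDecidable

/-- A subsequential string transducer with input alphabet `σ` and output alphabet `γ`. -/
structure Transducer (σ : Type) (γ : Type) : Type 1 where
  Q : Type
  fin : Finite Q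
  q0 : Q
  w0 : List γ
  δ : Q → σ → Option (Q × List γ)
  δF : Q → Option (List γ)

namespace Transducer

variable {σ γ : Type}

/-- The run relation `q →*^{u|w} q'`, as a function: from state `q`, reading `u`,
we reach the returned state producing the returned (concatenated) output. -/
def runFrom (M : Transducer σ γ) : M.Q → List σ → Option (M.Q × List γ)
  | q, [] => some (q, [])
  | q, a :: u =>
    (M.δ q a).bind fun x =>
      (M.runFrom x.1 u).map fun y => (y.1, x.2 ++ y.2)

/-- The semantics `⟦M⟧` of a transducer, as a partial function `Σ* → Γ*`. -/
def sem (M : Transducer σ γ) (u : List σ) : Option (List γ) :=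
  (M.runFrom M.q0 u).bind fun x => (M.δF x.1).map fun w' => M.w0 ++ x.2 ++ w'

/-- The number of states `|M|` of a transducer. -/
noncomputable def size (M : Transducer σ γ) : ℕ := Nat.card M.Q

/-- The run of `v` in `M` (from the initial state) uses the transition out of
state `q` reading letter `a`. -/
def usesTransition (M : Transducer σ γ) (q : M.Q) (a : σ) (v : List σ) : Prop :=
  ∃ (vp vs : List σ) (w : List γ), v = vp ++ a :: vs ∧ M.runFrom M.q0 vp = some (q, w)

/-- Modify the transition function of `M` at `(q, a)`: replace it by `o`
(`o = none` deletes the transition, `o = some (q', w)` makes it `q →^{a|w} q'`). -/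
noncomputable def modifyDelta (M : Transducer σ γ) (q : M.Q) (a : σ)
    (o : Option (M.Q × List γ)) : Transducer σ γ :=
  { M with δ := fun p b => if p = q ∧ b = a then o else M.δ p b }

/-- The product transducer `M × A` of a transducer and a DFA. -/
noncomputable def prodDFA {Q : Type} [Finite Q] (M : Transducer σ γ) (A : DFA σ Q) :
    Transducer σ γ where
  Q := M.Q × Q
  fin := by have := M.fin; infer_instance
  q0 := (M.q0, A.start)
  w0 := M.w0
  δ := fun qp a => (M.δ qp.1 a).map fun x => ((x.1, A.step qp.2 a), x.2)
  δF := fun qp => if qp.2 ∈ A.accept then M.δF qp.1 else none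

end Transducer

/-- A table entry: a word of `Γ*`, the wildcard `#`, or `⊥`. -/
inductive TVal (γ : Type) : Type where
  | word : List γ → TVal γ
  | hash : TVal γ
  | bot  : TVal γ

/-- An observation table for a target partial function `τ` with regular domain
upper bound `Up`, based on a finite prefix-closed set `P` and a finite
suffix-closed set `S` (both containing `ε`). -/
structure ObsTable (σ γ : Type) where
  P : Finset (List σ)
  S : Finset (List σ)
  eps_mem_P : ([] : List σ) ∈ P
  eps_mem_S : ([] : List σ) ∈ S
  prefixClosed : ∀ u ∈ P, ∀ v : List σ, v <+: u → v ∈ P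
  suffixClosed : ∀ u ∈ S, ∀ v : List σ, v <:+ u → v ∈ S
  Up : Language σ
  regular : ∃ (n : ℕ) (A : DFA σ (Fin n)), A.accepts = Up
  τ : List σ → Option (List γ)
  dom_subset : ∀ u : List σ, (τ u).isSome → u ∈ Up

namespace ObsTable

variable {σ γ : Type}

/-- The set `P ∪ PΣ`. -/
def rowIdx (T : ObsTable σ γ) : Set (List σ) :=
  ↑T.P ∪ {x | ∃ p ∈ T.P, ∃ a : σ, x = p ++ [a]}

/-- The set `(P ∪ PΣ)·S` on which the table is defined. -/
def rows (T : ObsTable σ γ) : Set (List σ) :=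
  {x | ∃ u ∈ T.rowIdx, ∃ v ∈ T.S, x = u ++ v}

/-- The table entry at `x`: `#` if `x ∉ Up`, `⊥` if `x ∈ Up ∖ dom τ`, and `τ x` otherwise. -/
noncomputable def val (T : ObsTable σ γ) (x : List σ) : TVal γ :=
  if x ∈ T.Up then
    match T.τ x with
    | some w => TVal.word w
    | none => TVal.bot
  else TVal.hash

/-- `P_T`: the set of prefixes of elements of `(P ∪ PΣ)·S`. -/
def PT (T : ObsTable σ γ) : Set (List σ) := {u | ∃ x ∈ T.rows, u <+: x}

/-- `P_Γ`: those `u ∈ P_T` having an extension whose table entry is a word of `Γ*`. -/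
def PGamma (T : ObsTable σ γ) : Set (List σ) :=
  {u | u ∈ T.PT ∧ ∃ v : List σ, u ++ v ∈ T.rows ∧ ∃ w, T.val (u ++ v) = TVal.word w}

/-- A transducer `M` is compatible with the table `T`. -/
def Compatible (T : ObsTable σ γ) (M : Transducer σ γ) : Prop :=
  ∀ x ∈ T.rows,
    (∀ w, T.val x = TVal.word w → M.sem x = some w) ∧
    (T.val x = TVal.bot → M.sem x = none)

lemma rowIdx_finite [Finite σ] (T : ObsTable σ γ) : T.rowIdx.Finite := by
  refine Set.Finite.union T.P.finite_toSet ?_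
  have h : {x : List σ | ∃ p ∈ T.P, ∃ a : σ, x = p ++ [a]}
      ⊆ (fun pa : List σ × σ => pa.1 ++ [pa.2]) '' ((↑T.P : Set (List σ)) ×ˢ (Set.univ : Set σ)) := by
    rintro x ⟨p, hp, a, rfl⟩
    exact ⟨(p, a), ⟨hp, trivial⟩, rfl⟩
  exact ((T.P.finite_toSet.prod Set.finite_univ).image _).subset h

lemma rows_finite [Finite σ] (T : ObsTable σ γ) : T.rows.Finite := by
  have h : T.rows ⊆ (fun uv : List σ × List σ => uv.1 ++ uv.2) '' (T.rowIdx ×ˢ (↑T.S : Set (List σ))) := by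
    rintro x ⟨u, hu, v, hv, rfl⟩
    exact ⟨(u, v), ⟨hu, hv⟩, rfl⟩
  exact (((rowIdx_finite T).prod T.S.finite_toSet).image _).subset h

lemma PT_finite [Finite σ] (T : ObsTable σ γ) : T.PT.Finite := by
  have h : T.PT ⊆ ⋃ x ∈ T.rows, {u : List σ | u ∈ x.inits} := by
    rintro u ⟨x, hx, hpre⟩
    exact Set.mem_biUnion hx (by simpa [List.mem_inits] using hpre)
  refine (Set.Finite.biUnion (rows_finite T) fun x _ => ?_).subset h
  exact x.inits.finite_toSet

end ObsTable

/-- A merging map `(≡, f)` on an observation table `T`. -/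
structure MergingMap {σ γ : Type} (T : ObsTable σ γ) where
  rel : List σ → List σ → Prop
  f : List σ → Option (List γ)
  rel_mem : ∀ u v : List σ, rel u v → u ∈ T.PT ∧ v ∈ T.PT
  rel_refl : ∀ u ∈ T.PT, rel u u
  rel_symm : ∀ {u v : List σ}, rel u v → rel v u
  rel_trans : ∀ {u v w : List σ}, rel u v → rel v w → rel u w
  f_mem : ∀ u : List σ, (f u).isSome → u ∈ T.PT
  cond1 : ∀ u v : List σ, f u = none → rel u v → f v = none
  cond2 : ∀ (u v : List σ) (w : List γ), u ∈ T.PT → u ++ v ∈ T.rows →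
    T.val (u ++ v) = TVal.word w → ∃ x, f u = some x ∧ x <+: w
  cond3 : ∀ (u : List σ) (a : σ) (w : List γ), f (u ++ [a]) = some w →
    ∃ x, f u = some x ∧ x <+: w
  cond4 : ∀ (u u' : List σ) (a : σ) (wu : List γ), f u = some wu → rel u u' →
    u ++ [a] ∈ T.PT → u' ++ [a] ∈ T.PT →
    rel (u ++ [a]) (u' ++ [a]) ∧
    ∀ wua, f (u ++ [a]) = some wua →
      ∃ (wu' x : List γ), f u' = some wu' ∧ wua = wu ++ x ∧ f (u' ++ [a]) = some (wu' ++ x)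
  cond5 : ∀ (u u' : List σ) (w : List γ), u ∈ T.rows → T.val u = TVal.word w → rel u u' →
    (u' ∈ T.rows → T.val u' ≠ TVal.bot) ∧
    ∀ w', u' ∈ T.rows → T.val u' = TVal.word w' →
      ∃ (x fu fu' : List γ), f u = some fu ∧ f u' = some fu' ∧ w = fu ++ x ∧ w' = fu' ++ x
  cond6 : ∀ (u : List σ) (a : σ), (f (u ++ [a])).isSome →
    (¬ ∃ v, rel u v ∧ v ++ [a] ∈ T.PGamma) → f (u ++ [a]) = f u

namespace MergingMap

variable {σ γ : Type} {T : ObsTable σ γ}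

/-- The `≡`-class of `u`. -/
def cls (m : MergingMap T) (u : List σ) : Set (List σ) := {v | m.rel u v}

/-- The set of `≡`-classes meeting `dom f`. -/
def classes (m : MergingMap T) : Set (Set (List σ)) :=
  {C | ∃ u : List σ, (m.f u).isSome ∧ C = m.cls u}

/-- The size of a merging map: the number of `≡`-classes meeting `dom f`. -/
noncomputable def size (m : MergingMap T) : ℕ := m.classes.ncard

lemma cls_mem_classes (m : MergingMap T) {u : List σ} (h : (m.f u).isSome) :
    m.cls u ∈ m.classes := ⟨u, h, rfl⟩

lemma classes_finite [Finite σ] (m : MergingMap T) : m.classes.Finite := by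
  have h : m.classes ⊆ m.cls '' T.PT := by
    rintro C ⟨u, hu, rfl⟩
    exact ⟨u, m.f_mem u hu, rfl⟩
  exact ((T.PT_finite).image _).subset h

/-- A muted pair `(u, a)` of a merging map. -/
def Muted (m : MergingMap T) (u : List σ) (a : σ) : Prop :=
  (m.f u).isSome ∧ (m.f (u ++ [a])).isSome ∧
    ¬ ∃ v, m.rel u v ∧ v ++ [a] ∈ T.PGamma

/-- An open end `(u, a)` of a merging map. -/
def OpenEnd (m : MergingMap T) (u : List σ) (a : σ) : Prop :=
  u ∈ T.PT ∧ ¬ ∃ v, m.rel u v ∧ v ++ [a] ∈ T.PT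

/-- The transducer resulting from a merging map (assuming `f ε` is defined,
so that the initial state exists). -/
noncomputable def resulting [Finite σ] (m : MergingMap T) (h0 : (m.f []).isSome) :
    Transducer σ γ where
  Q := {C : Set (List σ) // C ∈ m.classes}
  fin := m.classes_finite.to_subtype
  q0 := ⟨m.cls [], m.cls_mem_classes h0⟩
  w0 := (m.f []).get h0
  δ := fun q a =>
    if h : ∃ u : List σ, (m.f u).isSome ∧ (m.f (u ++ [a])).isSome ∧ q.1 = m.cls u then
      some (⟨m.cls (h.choose ++ [a]), m.cls_mem_classes h.choose_spec.2.1⟩,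
        ((m.f (h.choose ++ [a])).get h.choose_spec.2.1).drop
          ((m.f h.choose).get h.choose_spec.1).length)
    else none
  δF := fun q =>
    if h : ∃ u : List σ, (m.f u).isSome ∧ q.1 = m.cls u ∧ u ∈ T.rows ∧
        ∃ w, T.val u = TVal.word w then
      some (h.choose_spec.2.2.2.choose.drop ((m.f h.choose).get h.choose_spec.1).length)
    else none

/-- The state `q_u` of the resulting transducer associated with `u ∈ dom f`. -/
noncomputable def state [Finite σ] (m : MergingMap T) (h0 : (m.f []).isSome)
    {u : List σ} (h : (m.f u).isSome) : (m.resulting h0).Q :=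
  ⟨m.cls u, m.cls_mem_classes h⟩

/-- An open completion of a merging map, determined by a choice `g` of added
transitions (which, when used, must only be added at open ends, with output `ε`). -/
noncomputable def openCompletion [Finite σ] (m : MergingMap T) (h0 : (m.f []).isSome)
    (g : (m.resulting h0).Q → σ → Option ((m.resulting h0).Q)) : Transducer σ γ :=
  { m.resulting h0 with
    δ := fun q a =>
      match (m.resulting h0).δ q a with
      | some x => some x
      | none => (g q a).map fun q' => (q', ([] : List γ)) }

/-- The choice `g` of added transitions only adds transitions at open ends. -/
def ValidOpenChoice [Finite σ] (m : MergingMap T) (h0 : (m.f []).isSome)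
    (g : (m.resulting h0).Q → σ → Option ((m.resulting h0).Q)) : Prop :=
  ∀ (q : (m.resulting h0).Q) (a : σ), (g q a).isSome →
    ∃ u : List σ, q.1 = m.cls u ∧ m.OpenEnd u a

/-- The run of `x` in the open completion uses a muted or an open transition. -/
def usesMutedOrOpen [Finite σ] (m : MergingMap T) (h0 : (m.f []).isSome)
    (g : (m.resulting h0).Q → σ → Option ((m.resulting h0).Q)) (x : List σ) : Prop :=
  ∃ (vp : List σ) (a : σ) (vs : List σ) (q : (m.resulting h0).Q) (w : List γ),
    x = vp ++ a :: vs ∧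
    (m.openCompletion h0 g).runFrom (m.openCompletion h0 g).q0 vp = some (q, w) ∧
    ((∃ u, q.1 = m.cls u ∧ m.Muted u a) ∨ (m.resulting h0).δ q a = none)

end MergingMap

/-- The equivalence on `P_T` induced by a transducer: two words are related when
they reach the same state of `M` (or both fail to have a run). -/
def inducedRel {σ γ : Type} (M : Transducer σ γ) (T : ObsTable σ γ) (u v : List σ) : Prop :=
  u ∈ T.PT ∧ v ∈ T.PT ∧
    (M.runFrom M.q0 u).map Prod.fst = (M.runFrom M.q0 v).map Prod.fst

/-- Helper for the induced partial output function: walk through the word,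
appending the transition output only when the step leads into `P_Γ` for
some equivalent word. -/
noncomputable def goF {σ γ : Type} (M : Transducer σ γ) (T : ObsTable σ γ) :
    M.Q → List γ → List σ → Option (List γ)
  | _, acc, [] => some acc
  | q, acc, a :: rest =>
    (M.δ q a).bind fun x =>
      goF M T x.1
        (if ∃ v ∈ T.PT, (M.runFrom M.q0 v).map Prod.fst = some q ∧ v ++ [a] ∈ T.PGamma
          then acc ++ x.2 else acc) rest

/-- The partial output function induced by a transducer on `P_T`. -/
noncomputable def inducedF {σ γ : Type} (M : Transducer σ γ) (T : ObsTable σ γ)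
    (u : List σ) : Option (List γ) :=
  if u ∈ T.PT then goF M T M.q0 M.w0 u else none

/-!
The open completion `M'` of the merging map is compatible with `T`: along a word of the table
its run follows `f`, and open transitions are never taken inside `P_T`. Deleting from `M'` the
muted or open transition used by the run of `x` keeps it compatible, because a word whose entry
lies in `Γ*` only takes transitions into `P_Γ`, and deleting a transition can only shrink the
domain; but it removes `x` from the domain. Both transducers have as many states as `(≡, f)`, and
this is minimal: a compatible transducer `N` induces a merging map (words are equivalent when they
reach the same state, and `f` records the output along the run, silencing muted steps) with at
most `|N|` classes.
-/

namespace Transducer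

variable {σ γ : Type} (M : Transducer σ γ)

@[simp] lemma runFrom_nil (q : M.Q) : M.runFrom q [] = some (q, []) := rfl

@[simp] lemma runFrom_cons (q : M.Q) (a : σ) (u : List σ) :
    M.runFrom q (a :: u) =
      (M.δ q a).bind fun x => (M.runFrom x.1 u).map fun y => (y.1, x.2 ++ y.2) := rfl

lemma runFrom_append (q : M.Q) (u v : List σ) :
    M.runFrom q (u ++ v) =
      (M.runFrom q u).bind fun r => (M.runFrom r.1 v).map fun s => (s.1, r.2 ++ s.2) := by
  induction u generalizing q with
  | nil => simp
  | cons a u ih =>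
    simp only [List.cons_append, runFrom_cons, ih]
    cases M.δ q a with
    | none => rfl
    | some x => simp [Option.bind_map, Function.comp_def]

lemma runFrom_snoc (q : M.Q) (u : List σ) (a : σ) :
    M.runFrom q (u ++ [a]) =
      (M.runFrom q u).bind fun r => (M.δ r.1 a).map fun x => (x.1, r.2 ++ x.2) := by
  rw [runFrom_append]
  congr 1
  funext r
  simp only [runFrom_cons, runFrom_nil]
  cases M.δ r.1 a <;> simp

lemma runFrom_snoc_map_fst (q : M.Q) (u : List σ) (a : σ) :
    (M.runFrom q (u ++ [a])).map Prod.fst =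
      ((M.runFrom q u).map Prod.fst).bind fun p => (M.δ p a).map Prod.fst := by
  rw [runFrom_snoc, Option.map_bind, Option.bind_map]
  simp [Option.map_map, Function.comp_def]

lemma runFrom_append_of_eq_some {q q' : M.Q} {u : List σ} {w : List γ} (v : List σ)
    (h : M.runFrom q u = some (q', w)) :
    M.runFrom q (u ++ v) = (M.runFrom q' v).map fun s => (s.1, w ++ s.2) := by
  rw [runFrom_append, h]; rfl

lemma runFrom_append_of_eq_none {q : M.Q} {u : List σ} (v : List σ)
    (h : M.runFrom q u = none) : M.runFrom q (u ++ v) = none := by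
  rw [runFrom_append, h]; rfl

lemma sem_eq_some_iff {z : List σ} {w : List γ} :
    M.sem z = some w ↔ ∃ r o, M.runFrom M.q0 z = some r ∧ M.δF r.1 = some o ∧
      w = M.w0 ++ r.2 ++ o := by
  simp only [sem, Option.bind_eq_some_iff, Option.map_eq_some_iff]
  constructor
  · rintro ⟨r, hr, o, ho, rfl⟩; exact ⟨r, o, hr, ho, rfl⟩
  · rintro ⟨r, o, hr, ho, rfl⟩; exact ⟨r, hr, o, ho, rfl⟩

section modifyDelta

variable {q : M.Q} {a : σ}

-- Unfoldings with the states typed as `M.Q`, which `rw` does not identify with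
-- `(M.modifyDelta q a o).Q`.
lemma runFrom_modifyDelta_cons (o : Option (M.Q × List γ)) (p : M.Q) (b : σ) (z : List σ) :
    (M.modifyDelta q a o).runFrom p (b :: z) =
      (if p = q ∧ b = a then o else M.δ p b).bind fun x =>
        ((M.modifyDelta q a o).runFrom x.1 z).map fun y => (y.1, x.2 ++ y.2) := rfl

lemma sem_modifyDelta (o : Option (M.Q × List γ)) (z : List σ) :
    (M.modifyDelta q a o).sem z =
      ((M.modifyDelta q a o).runFrom M.q0 z).bind fun x =>
        (M.δF x.1).map fun w' => M.w0 ++ x.2 ++ w' := rfl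

lemma runFrom_eq_some_of_modifyDelta_none {p : M.Q} {z : List σ} {r : M.Q × List γ}
    (h : (M.modifyDelta q a none).runFrom p z = some r) : M.runFrom p z = some r := by
  induction z generalizing p r with
  | nil => exact h
  | cons b z ih =>
    by_cases hpb : p = q ∧ b = a
    · rw [runFrom_modifyDelta_cons, if_pos hpb] at h
      cases h
    · rw [runFrom_modifyDelta_cons, if_neg hpb] at h
      obtain ⟨x, hx, hxs⟩ := Option.bind_eq_some_iff.1 h
      obtain ⟨s, hs, rfl⟩ := Option.map_eq_some_iff.1 hxs
      rw [runFrom_cons, hx, Option.bind_some, ih hs]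
      rfl

lemma sem_eq_some_of_modifyDelta_none {z : List σ} {w : List γ}
    (h : (M.modifyDelta q a none).sem z = some w) : M.sem z = some w := by
  rw [sem_modifyDelta] at h
  simp only [sem, Option.bind_eq_some_iff] at h ⊢
  obtain ⟨r, hr, ho⟩ := h
  exact ⟨r, M.runFrom_eq_some_of_modifyDelta_none hr, ho⟩

lemma sem_modifyDelta_none_of_usesTransition {z : List σ} (h : M.usesTransition q a z) :
    (M.modifyDelta q a none).sem z = none := by
  obtain ⟨vp, vs, w, rfl, hvp⟩ := h
  have hrun : (M.modifyDelta q a none).runFrom M.q0 (vp ++ a :: vs) = none := by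
    cases h' : (M.modifyDelta q a none).runFrom M.q0 vp with
    | none => exact runFrom_append_of_eq_none _ _ h'
    | some r =>
      have hr : r = (q, w) := Option.some_injective _
        ((M.runFrom_eq_some_of_modifyDelta_none h').symm.trans hvp)
      subst hr
      rw [runFrom_append_of_eq_some _ _ h', runFrom_modifyDelta_cons, if_pos ⟨rfl, rfl⟩]
      rfl
  rw [sem_modifyDelta, hrun]
  rfl

lemma runFrom_modifyDelta_none_of_forall_ne {p : M.Q} {z : List σ}
    (h : ∀ vp vs w, z = vp ++ a :: vs → M.runFrom p vp ≠ some (q, w)) :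
    (M.modifyDelta q a none).runFrom p z = M.runFrom p z := by
  induction z generalizing p with
  | nil => rfl
  | cons b z ih =>
    have hpb : ¬ (p = q ∧ b = a) := by
      rintro ⟨rfl, rfl⟩
      exact h [] z [] rfl rfl
    rw [runFrom_modifyDelta_cons, if_neg hpb, runFrom_cons]
    cases hx : M.δ p b with
    | none => rfl
    | some x =>
      refine congrArg (Option.map _) (ih ?_)
      rintro vp vs w rfl hvp
      refine h (b :: vp) vs (x.2 ++ w) rfl ?_
      simp [hx, hvp]

lemma sem_modifyDelta_none_of_not_usesTransition {z : List σ}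
    (h : ¬ M.usesTransition q a z) : (M.modifyDelta q a none).sem z = M.sem z := by
  rw [sem_modifyDelta, M.runFrom_modifyDelta_none_of_forall_ne
    fun vp vs w hz hvp => h ⟨vp, vs, w, hz, hvp⟩]
  rfl

end modifyDelta

end Transducer

namespace ObsTable

variable {σ γ : Type} {T : ObsTable σ γ}

lemma mem_PT_of_mem_rows {x : List σ} (hx : x ∈ T.rows) : x ∈ T.PT :=
  ⟨x, hx, List.prefix_rfl⟩

lemma mem_PT_of_prefix {u v : List σ} (h : u <+: v) (hv : v ∈ T.PT) : u ∈ T.PT := by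
  obtain ⟨x, hx, hvx⟩ := hv
  exact ⟨x, hx, h.trans hvx⟩

lemma mem_PGamma_of_prefix_of_word {p x : List σ} {w : List γ} (hp : p <+: x)
    (hx : x ∈ T.rows) (hw : T.val x = TVal.word w) : p ∈ T.PGamma := by
  obtain ⟨t, rfl⟩ := hp
  exact ⟨mem_PT_of_prefix (List.prefix_append _ _) (mem_PT_of_mem_rows hx), t, hx, w, hw⟩

lemma Compatible.modifyDelta_none {M : Transducer σ γ} (hM : T.Compatible M) {q : M.Q} {a : σ}
    (h : ∀ z ∈ T.rows, ∀ w, T.val z = TVal.word w → ¬ M.usesTransition q a z) :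
    T.Compatible (M.modifyDelta q a none) := by
  intro z hz
  refine ⟨fun w hw => ?_, fun hb => ?_⟩
  · rw [M.sem_modifyDelta_none_of_not_usesTransition (h z hz w hw)]
    exact (hM z hz).1 w hw
  · cases hs : (M.modifyDelta q a none).sem z with
    | none => rfl
    | some w =>
      have hnone := (hM z hz).2 hb
      rw [M.sem_eq_some_of_modifyDelta_none hs] at hnone
      cases hnone

end ObsTable

namespace MergingMap

variable {σ γ : Type} {T : ObsTable σ γ} (m : MergingMap T)

lemma cls_eq_of_rel {u v : List σ} (h : m.rel u v) : m.cls u = m.cls v := by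
  ext w
  exact ⟨m.rel_trans (m.rel_symm h), m.rel_trans h⟩

lemma rel_of_cls_eq {u v : List σ} (h : m.cls u = m.cls v) (hv : v ∈ T.PT) : m.rel u v := by
  change v ∈ m.cls u
  rw [h]
  exact m.rel_refl v hv

lemma f_isSome_of_prefix_of_word {z p : List σ} {w : List γ} (hp : p <+: z)
    (hz : z ∈ T.rows) (hw : T.val z = TVal.word w) : (m.f p).isSome := by
  obtain ⟨t, rfl⟩ := hp
  obtain ⟨x, hx, -⟩ := m.cond2 p t w
    (ObsTable.mem_PT_of_prefix (List.prefix_append _ _) (ObsTable.mem_PT_of_mem_rows hz)) hz hw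
  simp [hx]

section resulting

variable [Finite σ] (h0 : (m.f []).isSome)

lemma resulting_δ_state {p : List σ} {b : σ} {wp wpb : List γ} (hp : m.f p = some wp)
    (hpb : m.f (p ++ [b]) = some wpb) :
    ∃ o, (m.resulting h0).δ (m.state h0 (Option.isSome_of_eq_some hp)) b =
      some (m.state h0 (Option.isSome_of_eq_some hpb), o) ∧ wp ++ o = wpb := by
  have hcond : ∃ u : List σ, (m.f u).isSome ∧ (m.f (u ++ [b])).isSome ∧
      (m.state h0 (Option.isSome_of_eq_some hp)).1 = m.cls u :=
    ⟨p, Option.isSome_of_eq_some hp, Option.isSome_of_eq_some hpb, rfl⟩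
  obtain ⟨hu, hub, hcls⟩ := hcond.choose_spec
  have hrel : m.rel p hcond.choose := m.rel_of_cls_eq hcls (m.f_mem _ hu)
  obtain ⟨hrelb, hout⟩ := m.cond4 p _ b wp hp hrel (m.f_mem _ (Option.isSome_of_eq_some hpb))
    (m.f_mem _ hub)
  obtain ⟨wu, x, hfu, rfl, hfub⟩ := hout _ hpb
  refine ⟨x, ?_, rfl⟩
  show (if h : _ then _ else _) = _
  refine (dif_pos hcond).trans ?_
  rw [Option.get_of_eq_some _ hfu, Option.get_of_eq_some _ hfub, List.drop_left]
  exact congrArg some (Prod.ext (Subtype.ext (m.cls_eq_of_rel hrelb).symm) rfl)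

lemma resulting_δ_state_eq_none {p : List σ} {b : σ} (hp : (m.f p).isSome)
    (hpb : p ++ [b] ∈ T.PT) (hn : m.f (p ++ [b]) = none) :
    (m.resulting h0).δ (m.state h0 hp) b = none := by
  show (if h : _ then _ else _) = _
  refine dif_neg ?_
  rintro ⟨u, -, hub, hcls⟩
  have hrel : m.rel p u :=
    m.rel_of_cls_eq hcls (ObsTable.mem_PT_of_prefix (List.prefix_append u [b]) (m.f_mem _ hub))
  have hrelb := (m.cond4 p u b _ (Option.eq_some_of_isSome hp) hrel hpb (m.f_mem _ hub)).1
  simp [m.cond1 _ _ hn hrelb] at hub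

lemma resulting_δF_state_of_word {u : List σ} {wu w : List γ} (hu : m.f u = some wu)
    (hrow : u ∈ T.rows) (hval : T.val u = TVal.word w) :
    ∃ o, (m.resulting h0).δF (m.state h0 (Option.isSome_of_eq_some hu)) = some o ∧
      wu ++ o = w := by
  have hcond : ∃ v : List σ, (m.f v).isSome ∧
      (m.state h0 (Option.isSome_of_eq_some hu)).1 = m.cls v ∧ v ∈ T.rows ∧
      ∃ w', T.val v = TVal.word w' := ⟨u, Option.isSome_of_eq_some hu, rfl, hrow, w, hval⟩
  obtain ⟨hv, hcls, hvrow, hvval⟩ := hcond.choose_spec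
  have hrel : m.rel u hcond.choose := m.rel_of_cls_eq hcls (m.f_mem _ hv)
  obtain ⟨x, fu, fv, hfu, hfv, hw, hw'⟩ :=
    (m.cond5 u _ w hrow hval hrel).2 _ hvrow hvval.choose_spec
  rw [hu, Option.some_inj] at hfu
  subst hfu
  refine ⟨x, ?_, hw.symm⟩
  show (if h : _ then _ else _) = _
  refine (dif_pos hcond).trans ?_
  rw [Option.get_of_eq_some _ hfv, hw', List.drop_left]

lemma resulting_δF_state_of_bot {u : List σ} (hu : (m.f u).isSome) (hrow : u ∈ T.rows)
    (hval : T.val u = TVal.bot) : (m.resulting h0).δF (m.state h0 hu) = none := by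
  show (if h : _ then _ else _) = _
  refine dif_neg ?_
  rintro ⟨v, hv, hcls, hvrow, w, hvval⟩
  have hrel : m.rel v u := m.rel_symm (m.rel_of_cls_eq hcls (m.f_mem _ hv))
  exact (m.cond5 v u w hvrow hvval hrel).1 hrow hval

lemma size_resulting : (m.resulting h0).size = m.size :=
  Nat.card_coe_set_eq m.classes

variable (g : (m.resulting h0).Q → σ → Option ((m.resulting h0).Q))

lemma openCompletion_δ (q : (m.resulting h0).Q) (b : σ) :
    (m.openCompletion h0 g).δ q b =
      ((m.resulting h0).δ q b).or ((g q b).map fun q' => (q', [])) := by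
  cases h : (m.resulting h0).δ q b <;> simp only [openCompletion, h] <;> rfl

lemma openCompletion_δ_of_resulting {q : (m.resulting h0).Q} {b : σ}
    {x : (m.resulting h0).Q × List γ} (h : (m.resulting h0).δ q b = some x) :
    (m.openCompletion h0 g).δ q b = some x := by
  rw [openCompletion_δ, h]
  rfl

lemma openCompletion_δ_state_eq_none (hg : m.ValidOpenChoice h0 g) {p : List σ} {b : σ}
    (hp : (m.f p).isSome) (hpb : p ++ [b] ∈ T.PT) (hn : m.f (p ++ [b]) = none) :
    (m.openCompletion h0 g).δ (m.state h0 hp) b = none := by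
  have hgn : g (m.state h0 hp) b = none := by
    by_contra hsome
    obtain ⟨u, hcls, -, hopen⟩ := hg _ b (Option.ne_none_iff_isSome.1 hsome)
    exact hopen ⟨p, m.rel_of_cls_eq hcls.symm (m.f_mem _ hp), hpb⟩
  rw [openCompletion_δ, m.resulting_δ_state_eq_none h0 hp hpb hn, hgn]
  rfl

lemma openCompletion_runFrom_state {z : List σ} {wz : List γ} (hz : m.f z = some wz) :
    ∃ o, (m.openCompletion h0 g).runFrom (m.openCompletion h0 g).q0 z =
      some (m.state h0 (Option.isSome_of_eq_some hz), o) ∧ (m.resulting h0).w0 ++ o = wz := by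
  induction z using List.reverseRecOn generalizing wz with
  | nil =>
    refine ⟨[], rfl, ?_⟩
    rw [List.append_nil]
    exact Option.get_of_eq_some _ hz
  | append_singleton y b ih =>
    obtain ⟨wy, hy, -⟩ := m.cond3 y b wz hz
    obtain ⟨o, hrun, ho⟩ := ih hy
    obtain ⟨o', hδ, ho'⟩ := m.resulting_δ_state h0 hy hz
    refine ⟨o ++ o', ?_, by rw [← List.append_assoc, ho, ho']⟩
    rw [Transducer.runFrom_snoc, hrun]
    exact congrArg (Option.map _) (m.openCompletion_δ_of_resulting h0 g hδ)

lemma openCompletion_runFrom_eq_none (hg : m.ValidOpenChoice h0 g) {z : List σ}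
    (hz : z ∈ T.PT) (hn : m.f z = none) :
    (m.openCompletion h0 g).runFrom (m.openCompletion h0 g).q0 z = none := by
  induction z using List.reverseRecOn with
  | nil => simp [hn] at h0
  | append_singleton y b ih =>
    have hy : y ∈ T.PT := ObsTable.mem_PT_of_prefix (List.prefix_append y [b]) hz
    cases hfy : m.f y with
    | none => exact Transducer.runFrom_append_of_eq_none _ _ (ih hy hfy)
    | some wy =>
      obtain ⟨o, hrun, -⟩ := m.openCompletion_runFrom_state h0 g hfy
      rw [Transducer.runFrom_snoc, hrun]
      exact congrArg (Option.map _)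
        (m.openCompletion_δ_state_eq_none h0 g hg (Option.isSome_of_eq_some hfy) hz hn)

lemma compatible_openCompletion (hg : m.ValidOpenChoice h0 g) :
    T.Compatible (m.openCompletion h0 g) := by
  intro z hz
  refine ⟨fun w hw => ?_, fun hb => ?_⟩
  · obtain ⟨wz, hfz⟩ := Option.isSome_iff_exists.1
      (m.f_isSome_of_prefix_of_word List.prefix_rfl hz hw)
    obtain ⟨o, hrun, ho⟩ := m.openCompletion_runFrom_state h0 g hfz
    obtain ⟨o', hδF, ho'⟩ := m.resulting_δF_state_of_word h0 hfz hz hw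
    refine (Transducer.sem_eq_some_iff _).2 ⟨_, o', hrun, hδF, ?_⟩
    subst ho' ho
    rfl
  · cases hfz : m.f z with
    | none => simp [Transducer.sem, m.openCompletion_runFrom_eq_none h0 g hg
        (ObsTable.mem_PT_of_mem_rows hz) hfz]
    | some wz =>
      obtain ⟨o, hrun, -⟩ := m.openCompletion_runFrom_state h0 g hfz
      rw [Transducer.sem, hrun]
      exact congrArg (Option.map _)
        (m.resulting_δF_state_of_bot h0 (Option.isSome_of_eq_some hfz) hz hb)

lemma not_usesTransition_openCompletion_of_word {qx : (m.resulting h0).Q} {a : σ}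
    (hqx : (∃ u, qx.1 = m.cls u ∧ m.Muted u a) ∨ (m.resulting h0).δ qx a = none)
    {z : List σ} {w : List γ} (hz : z ∈ T.rows) (hw : T.val z = TVal.word w) :
    ¬ (m.openCompletion h0 g).usesTransition qx a z := by
  rintro ⟨vp, vs, o, rfl, hrun⟩
  have hpre : vp ++ [a] <+: vp ++ a :: vs := ⟨vs, by simp⟩
  obtain ⟨wpa, hpa⟩ := Option.isSome_iff_exists.1 (m.f_isSome_of_prefix_of_word hpre hz hw)
  obtain ⟨wp, hp, -⟩ := m.cond3 vp a _ hpa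
  obtain ⟨o', hrun', -⟩ := m.openCompletion_runFrom_state h0 g hp
  have hq : m.state h0 (Option.isSome_of_eq_some hp) = qx := by
    rw [hrun'] at hrun
    exact congrArg Prod.fst (Option.some_injective _ hrun)
  subst hq
  rcases hqx with ⟨u, hcls, -, -, hmuted⟩ | hopen
  · exact hmuted ⟨vp, m.rel_of_cls_eq hcls.symm (m.f_mem _ (Option.isSome_of_eq_some hp)),
      ObsTable.mem_PGamma_of_prefix_of_word hpre hz hw⟩
  · obtain ⟨_, hδ, -⟩ := m.resulting_δ_state h0 hp hpa
    simp [hopen] at hδ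

end resulting

end MergingMap

section InducedMergingMap

variable {σ γ : Type} (N : Transducer σ γ) (T : ObsTable σ γ)

def UnmutedStep (q : N.Q) (a : σ) : Prop :=
  ∃ v ∈ T.PT, (N.runFrom N.q0 v).map Prod.fst = some q ∧ v ++ [a] ∈ T.PGamma

lemma goF_cons (q : N.Q) (acc : List γ) (a : σ) (rest : List σ) :
    goF N T q acc (a :: rest) = (N.δ q a).bind fun x =>
      goF N T x.1 (if UnmutedStep N T q a then acc ++ x.2 else acc) rest := rfl

lemma goF_isSome_iff (z : List σ) (q : N.Q) (acc : List γ) :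
    (goF N T q acc z).isSome ↔ (N.runFrom q z).isSome := by
  induction z generalizing q acc with
  | nil => simp [goF]
  | cons a rest ih =>
    rw [goF_cons, Transducer.runFrom_cons]
    cases N.δ q a <;> simp [ih]

lemma goF_append (z₁ z₂ : List σ) (q : N.Q) (acc : List γ) :
    goF N T q acc (z₁ ++ z₂) = (N.runFrom q z₁).bind fun r =>
      (goF N T q acc z₁).bind fun w => goF N T r.1 w z₂ := by
  induction z₁ generalizing q acc with
  | nil => simp [goF]
  | cons a rest ih =>
    rw [List.cons_append, goF_cons, goF_cons, Transducer.runFrom_cons]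
    cases N.δ q a with
    | none => rfl
    | some x =>
      simp only [Option.bind_some, ih]
      cases N.runFrom x.1 rest <;> simp

variable {N T} {u u' : List σ} {a : σ}

lemma mem_PT_of_inducedF_isSome (h : (inducedF N T u).isSome) : u ∈ T.PT := by
  by_contra hu
  simp [inducedF, hu] at h

lemma inducedF_isSome_iff (hu : u ∈ T.PT) :
    (inducedF N T u).isSome ↔ (N.runFrom N.q0 u).isSome := by
  rw [inducedF, if_pos hu]
  exact goF_isSome_iff N T u N.q0 N.w0

lemma inducedF_snoc {r : N.Q × List γ} {w : List γ} {x : N.Q × List γ}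
    (hua : u ++ [a] ∈ T.PT) (hr : N.runFrom N.q0 u = some r) (hw : inducedF N T u = some w)
    (hx : N.δ r.1 a = some x) :
    inducedF N T (u ++ [a]) = some (w ++ if UnmutedStep N T r.1 a then x.2 else []) := by
  have hu : u ∈ T.PT := ObsTable.mem_PT_of_prefix (List.prefix_append u [a]) hua
  rw [inducedF, if_pos hu] at hw
  rw [inducedF, if_pos hua, goF_append, hr, Option.bind_some, hw, Option.bind_some, goF_cons, hx,
    Option.bind_some]
  split_ifs <;> simp [goF]

lemma exists_of_inducedF_snoc_isSome (h : (inducedF N T (u ++ [a])).isSome) :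
    ∃ r w x, N.runFrom N.q0 u = some r ∧ inducedF N T u = some w ∧ N.δ r.1 a = some x ∧
      inducedF N T (u ++ [a]) = some (w ++ if UnmutedStep N T r.1 a then x.2 else []) := by
  have hua := mem_PT_of_inducedF_isSome h
  have hu : u ∈ T.PT := ObsTable.mem_PT_of_prefix (List.prefix_append u [a]) hua
  obtain ⟨rua, hrua⟩ := Option.isSome_iff_exists.1 ((inducedF_isSome_iff hua).1 h)
  rw [Transducer.runFrom_snoc] at hrua
  obtain ⟨r, hr, hrx⟩ := Option.bind_eq_some_iff.1 hrua
  obtain ⟨x, hx, -⟩ := Option.map_eq_some_iff.1 hrx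
  obtain ⟨w, hw⟩ :=
    Option.isSome_iff_exists.1 ((inducedF_isSome_iff hu).2 (Option.isSome_of_eq_some hr))
  exact ⟨r, w, x, hr, hw, hx, inducedF_snoc hua hr hw hx⟩

lemma inducedF_of_prefix_of_word {z p : List σ} {w : List γ} (hz : z ∈ T.rows)
    (hw : T.val z = TVal.word w) (hp : p <+: z) {r : N.Q × List γ}
    (hr : N.runFrom N.q0 p = some r) : inducedF N T p = some (N.w0 ++ r.2) := by
  induction p using List.reverseRecOn generalizing r with
  | nil =>
    rw [Transducer.runFrom_nil, Option.some_inj] at hr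
    subst hr
    rw [inducedF, if_pos (ObsTable.mem_PT_of_prefix hp (ObsTable.mem_PT_of_mem_rows hz))]
    simp [goF]
  | append_singleton y b ih =>
    rw [Transducer.runFrom_snoc] at hr
    obtain ⟨ry, hry, hrx⟩ := Option.bind_eq_some_iff.1 hr
    obtain ⟨x, hx, rfl⟩ := Option.map_eq_some_iff.1 hrx
    have hunmuted : UnmutedStep N T ry.1 b :=
      ⟨y, ObsTable.mem_PT_of_prefix ((List.prefix_append y [b]).trans hp)
        (ObsTable.mem_PT_of_mem_rows hz), by simp [hry],
        ObsTable.mem_PGamma_of_prefix_of_word hp hz hw⟩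
    rw [inducedF_snoc (ObsTable.mem_PT_of_prefix hp (ObsTable.mem_PT_of_mem_rows hz)) hry
      (ih ((List.prefix_append y [b]).trans hp) hry) hx, if_pos hunmuted, List.append_assoc]

lemma exists_runFrom_of_inducedRel (h : inducedRel N T u u')
    {r : N.Q × List γ} (hr : N.runFrom N.q0 u = some r) :
    ∃ w, N.runFrom N.q0 u' = some (r.1, w) := by
  obtain ⟨-, -, hfst⟩ := h
  rw [hr, Option.map_some, eq_comm, Option.map_eq_some_iff] at hfst
  obtain ⟨r', hr', hq⟩ := hfst
  exact ⟨r'.2, by rw [hr', ← hq]⟩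

lemma inducedF_eq_none_of_inducedRel (hu : inducedF N T u = none)
    (h : inducedRel N T u u') : inducedF N T u' = none := by
  rw [← Option.not_isSome_iff_eq_none] at hu ⊢
  rwa [inducedF_isSome_iff h.2.1, ← Option.isSome_map (f := Prod.fst), ← h.2.2,
    Option.isSome_map, ← inducedF_isSome_iff h.1]

lemma exists_inducedF_prefix_of_word (hN : T.Compatible N) {v : List σ} {w : List γ}
    (hrow : u ++ v ∈ T.rows) (hval : T.val (u ++ v) = TVal.word w) :
    ∃ x, inducedF N T u = some x ∧ x <+: w := by
  obtain ⟨r, o, hr, -, rfl⟩ := N.sem_eq_some_iff.1 ((hN _ hrow).1 w hval)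
  rw [Transducer.runFrom_append] at hr
  obtain ⟨ru, hru, hrv⟩ := Option.bind_eq_some_iff.1 hr
  obtain ⟨rv, -, rfl⟩ := Option.map_eq_some_iff.1 hrv
  exact ⟨_, inducedF_of_prefix_of_word hrow hval (List.prefix_append u v) hru, rv.2 ++ o,
    by simp⟩

lemma exists_inducedF_prefix_snoc {w : List γ} (h : inducedF N T (u ++ [a]) = some w) :
    ∃ x, inducedF N T u = some x ∧ x <+: w := by
  obtain ⟨r, x, y, -, hx, -, hux⟩ :=
    exists_of_inducedF_snoc_isSome (Option.isSome_of_eq_some h)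
  rw [h, Option.some_inj] at hux
  exact ⟨x, hx, hux ▸ List.prefix_append _ _⟩

lemma inducedRel_snoc (h : inducedRel N T u u') (hua : u ++ [a] ∈ T.PT)
    (hu'a : u' ++ [a] ∈ T.PT) : inducedRel N T (u ++ [a]) (u' ++ [a]) :=
  ⟨hua, hu'a, by rw [N.runFrom_snoc_map_fst, N.runFrom_snoc_map_fst, h.2.2]⟩

lemma inducedF_snoc_of_inducedRel {wu wua : List γ} (hu : inducedF N T u = some wu)
    (h : inducedRel N T u u') (hu'a : u' ++ [a] ∈ T.PT)
    (hua : inducedF N T (u ++ [a]) = some wua) :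
    ∃ wu' x, inducedF N T u' = some wu' ∧ wua = wu ++ x ∧
      inducedF N T (u' ++ [a]) = some (wu' ++ x) := by
  obtain ⟨r, w, x, hr, hw, hx, hwua⟩ :=
    exists_of_inducedF_snoc_isSome (Option.isSome_of_eq_some hua)
  rw [hu, Option.some_inj] at hw
  subst hw
  rw [hua, Option.some_inj] at hwua
  obtain ⟨w', hr'⟩ := exists_runFrom_of_inducedRel h hr
  obtain ⟨wu', hwu'⟩ := Option.isSome_iff_exists.1
    ((inducedF_isSome_iff h.2.1).2 (Option.isSome_of_eq_some hr'))
  exact ⟨wu', _, hwu', hwua, inducedF_snoc (r := (r.1, w')) hu'a hr' hwu' hx⟩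

lemma inducedF_of_inducedRel_of_word (hN : T.Compatible N) {w : List γ} (hrow : u ∈ T.rows)
    (hval : T.val u = TVal.word w) (h : inducedRel N T u u') :
    (u' ∈ T.rows → T.val u' ≠ TVal.bot) ∧
      ∀ w', u' ∈ T.rows → T.val u' = TVal.word w' → ∃ x fu fu',
        inducedF N T u = some fu ∧ inducedF N T u' = some fu' ∧
          w = fu ++ x ∧ w' = fu' ++ x := by
  obtain ⟨r, o, hr, ho, rfl⟩ := N.sem_eq_some_iff.1 ((hN u hrow).1 w hval)
  obtain ⟨w₂, hr'⟩ := exists_runFrom_of_inducedRel h hr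
  refine ⟨fun hrow' hbot => ?_, fun w' hrow' hval' => ?_⟩
  · have hnone := (hN u' hrow').2 hbot
    simp [Transducer.sem, hr', ho] at hnone
  · obtain ⟨r', o', hr'', ho', rfl⟩ := N.sem_eq_some_iff.1 ((hN u' hrow').1 w' hval')
    rw [hr', Option.some_inj] at hr''
    subst hr''
    rw [ho, Option.some_inj] at ho'
    subst ho'
    exact ⟨o, _, _, inducedF_of_prefix_of_word hrow hval List.prefix_rfl hr,
      inducedF_of_prefix_of_word hrow' hval' List.prefix_rfl hr', rfl, rfl⟩

lemma inducedF_snoc_of_muted (h : (inducedF N T (u ++ [a])).isSome)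
    (hmuted : ¬ ∃ v, inducedRel N T u v ∧ v ++ [a] ∈ T.PGamma) :
    inducedF N T (u ++ [a]) = inducedF N T u := by
  obtain ⟨r, w, x, hr, hw, -, hwa⟩ := exists_of_inducedF_snoc_isSome h
  have hu : u ∈ T.PT := mem_PT_of_inducedF_isSome (Option.isSome_of_eq_some hw)
  have hnot : ¬ UnmutedStep N T r.1 a := by
    rintro ⟨v, hv, hvq, hva⟩
    exact hmuted ⟨v, ⟨hu, hv, by rw [hr, hvq]; rfl⟩, hva⟩
  rw [hwa, hw, if_neg hnot, List.append_nil]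

variable (N T) in
noncomputable def inducedMergingMap (hN : T.Compatible N) : MergingMap T where
  rel := inducedRel N T
  f := inducedF N T
  rel_mem _ _ h := ⟨h.1, h.2.1⟩
  rel_refl _ hu := ⟨hu, hu, rfl⟩
  rel_symm h := ⟨h.2.1, h.1, h.2.2.symm⟩
  rel_trans h₁ h₂ := ⟨h₁.1, h₂.2.1, h₁.2.2.trans h₂.2.2⟩
  f_mem _ := mem_PT_of_inducedF_isSome
  cond1 _ _ := inducedF_eq_none_of_inducedRel
  cond2 _ _ _ _ := exists_inducedF_prefix_of_word hN
  cond3 _ _ _ := exists_inducedF_prefix_snoc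
  cond4 _ _ _ _ hu h hua hu'a :=
    ⟨inducedRel_snoc h hua hu'a, fun _ => inducedF_snoc_of_inducedRel hu h hu'a⟩
  cond5 _ _ _ := inducedF_of_inducedRel_of_word hN
  cond6 _ _ := inducedF_snoc_of_muted

lemma inducedMergingMap_size_le (hN : T.Compatible N) :
    (inducedMergingMap N T hN).size ≤ N.size := by
  have := N.fin
  let reach : N.Q → Set (List σ) := fun q =>
    {v | v ∈ T.PT ∧ (N.runFrom N.q0 v).map Prod.fst = some q}
  have hsub : (inducedMergingMap N T hN).classes ⊆ Set.range reach := by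
    rintro C ⟨u, hu, rfl⟩
    have huPT := mem_PT_of_inducedF_isSome hu
    obtain ⟨r, hr⟩ := Option.isSome_iff_exists.1 ((inducedF_isSome_iff huPT).1 hu)
    refine ⟨r.1, Set.ext fun v => ?_⟩
    simp [reach, MergingMap.cls, inducedMergingMap, inducedRel, huPT, hr, eq_comm]
  calc (inducedMergingMap N T hN).size ≤ (Set.range reach).ncard := Set.ncard_le_ncard hsub
    _ ≤ Nat.card N.Q := by
      rw [← Set.image_univ]
      exact le_trans Set.ncard_image_le (Set.ncard_univ _).le

end InducedMergingMap

theorem competing_of_mutedOrOpen_witness_general {σ γ : Type} [Finite σ]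
    (T : ObsTable σ γ) (m : MergingMap T)
    (hmin : ∀ m' : MergingMap T, m.size ≤ m'.size)
    (h0 : (m.f []).isSome)
    (g : (m.resulting h0).Q → σ → Option ((m.resulting h0).Q))
    (hg : m.ValidOpenChoice h0 g)
    (x : List σ) (hxUp : x ∈ T.Up)
    (hxdom : ((m.openCompletion h0 g).sem x).isSome)
    (huse : m.usesMutedOrOpen h0 g x) :
    ∃ M1 M2 : Transducer σ γ,
      T.Compatible M1 ∧ T.Compatible M2 ∧
      (∀ N : Transducer σ γ, T.Compatible N → M1.size ≤ N.size) ∧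
      (∀ N : Transducer σ γ, T.Compatible N → M2.size ≤ N.size) ∧
      ∃ y ∈ T.Up, M1.sem y ≠ M2.sem y := by
  obtain ⟨vp, a, vs, qx, w, rfl, hrun, hqx⟩ := huse
  have hcompat := m.compatible_openCompletion h0 g hg
  have hminimal : ∀ N : Transducer σ γ, T.Compatible N → (m.resulting h0).size ≤ N.size :=
    fun N hN => (m.size_resulting h0).trans_le
      ((hmin _).trans (inducedMergingMap_size_le hN))
  refine ⟨m.openCompletion h0 g, (m.openCompletion h0 g).modifyDelta qx a none, hcompat,
    hcompat.modifyDelta_none fun z hz w hw =>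
      m.not_usesTransition_openCompletion_of_word h0 g hqx hz hw,
    hminimal, hminimal, _, hxUp, ?_⟩
  rw [Transducer.sem_modifyDelta_none_of_usesTransition _ ⟨vp, vs, w, rfl, hrun⟩]
  exact Option.ne_none_iff_isSome.2 hxdom

/-- If some open completion of a minimal merging map accepts a
word of `Up` whose run uses a muted or open transition, then there exist two
competing minimal transducers compatible with `T` (minimal in number of states
among compatible transducers, non-equivalent on `Up`). -/
theorem competing_of_mutedOrOpen_witness {σ γ : Type} [Finite σ] [Finite γ]
    (T : ObsTable σ γ) (m : MergingMap T)
    (hmin : ∀ m' : MergingMap T, m.size ≤ m'.size)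
    (h0 : (m.f []).isSome)
    (g : (m.resulting h0).Q → σ → Option ((m.resulting h0).Q))
    (hg : m.ValidOpenChoice h0 g)
    (x : List σ) (hxUp : x ∈ T.Up)
    (hxdom : ((m.openCompletion h0 g).sem x).isSome)
    (huse : m.usesMutedOrOpen h0 g x) :
    ∃ M1 M2 : Transducer σ γ,
      T.Compatible M1 ∧ T.Compatible M2 ∧
      (∀ N : Transducer σ γ, T.Compatible N → M1.size ≤ N.size) ∧
      (∀ N : Transducer σ γ, T.Compatible N → M2.size ≤ N.size) ∧
      ∃ y ∈ T.Up, M1.sem y ≠ M2.sem y :=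
  competing_of_mutedOrOpen_witness_general T m hmin h0 g hg x hxUp hxdom huse
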